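/- arXiv:1509.05196 — 2 statements merged into one kernel-verified Lean document; each statement's English description precedes it below -/
import Mathlib

section
/- (Theorem 3, part ii) Under Assumptions 1 and 2, let the AGT stepsize satisfy 0 < γ < 2/L, so that ρ := max{|1−γm|, |1−γL|} < 1, and define σ := 1 + h·(C₀C₁/m² + C₂/m). If the sampling period satisfies ρ^τ·σ < 1, i.e. h < (C₀C₁/m² + C₂/m)⁻¹·(ρ^{−τ} − 1), then the AGT iterates satisfy, for every k ≥ 0: ‖x_k − x*(t_k)‖ ≤ (ρ^τσ)^k·‖x₀ − x*(t₀)‖ + ρ^τ·(h²/2)·(C₀²C₁/m³ + 2C₀C₂/m² + 2C₃/m)·(1 − (ρ^τσ)^k)/(1 − ρ^τσ). -/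
/-!
The error `eₖ = ‖xₖ - x*(tₖ)‖` obeys `eₖ₊₁ ≤ ρ^τ (σ eₖ + h²Δ/2)`, with
`Δ = C₀²C₁/m³ + 2C₀C₂/m² + 2C₃/m`; unrolling this linear recursion gives the bound.
The factor `ρ^τ` comes from the correction: the Hessian spectrum lies in `[m, L]`, so every
gradient step is a `ρ`-contraction towards `x*(tₖ₊₁)`. The prediction map is `σ`-Lipschitz, by
the Lipschitz bounds on `[∇ₓₓ f]⁻¹` and on the finite difference; at `x*(tₖ)` it lands within
`h²Δ/2` of `x*(tₖ₊₁)`, because the exact gradient-tracking step cancels the first-order Taylor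
terms of `∇ₓ f` around `(x*(tₖ), tₖ)`, and the finite difference is `C₃h/2`-accurate.
-/

noncomputable section

/-- The setting of a time-varying, smooth, strongly convex optimization problem
`min_{x ∈ ℝⁿ} f(x;t)`, bundling the objective `f`, its derivatives, the Hessian
inverse, the optimal trajectory `x*(t)`, and Assumptions 1 and 2 of the paper. -/
structure TVOpt (n : ℕ) where
  /-- the objective `f(x;t)` -/
  f : EuclideanSpace ℝ (Fin n) → ℝ → ℝ
  /-- the gradient `∇ₓ f(x;t)` -/
  grad : EuclideanSpace ℝ (Fin n) → ℝ → EuclideanSpace ℝ (Fin n)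
  /-- the Hessian `∇ₓₓ f(x;t)` -/
  hess : EuclideanSpace ℝ (Fin n) → ℝ →
    EuclideanSpace ℝ (Fin n) →L[ℝ] EuclideanSpace ℝ (Fin n)
  /-- the Hessian inverse `[∇ₓₓ f(x;t)]⁻¹` -/
  hessInv : EuclideanSpace ℝ (Fin n) → ℝ →
    EuclideanSpace ℝ (Fin n) →L[ℝ] EuclideanSpace ℝ (Fin n)
  /-- the mixed partial derivative `∇_{tx} f(x;t)` -/
  dtgrad : EuclideanSpace ℝ (Fin n) → ℝ → EuclideanSpace ℝ (Fin n)
  /-- the third derivative tensor `∇ₓₓₓ f(x;t)` -/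
  d3 : EuclideanSpace ℝ (Fin n) → ℝ →
    EuclideanSpace ℝ (Fin n) →L[ℝ] EuclideanSpace ℝ (Fin n) →L[ℝ] EuclideanSpace ℝ (Fin n)
  /-- the time derivative of the Hessian `∇_{xtx} f(x;t)` -/
  dthess : EuclideanSpace ℝ (Fin n) → ℝ →
    EuclideanSpace ℝ (Fin n) →L[ℝ] EuclideanSpace ℝ (Fin n)
  /-- the second time derivative of the gradient `∇_{ttx} f(x;t)` -/
  dttgrad : EuclideanSpace ℝ (Fin n) → ℝ → EuclideanSpace ℝ (Fin n)
  /-- the optimal trajectory `x*(t)` -/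
  xstar : ℝ → EuclideanSpace ℝ (Fin n)
  /-- strong convexity constant -/
  m : ℝ
  /-- Hessian norm bound (gradient Lipschitz constant) -/
  L : ℝ
  C0 : ℝ
  C1 : ℝ
  C2 : ℝ
  C3 : ℝ
  m_pos : 0 < m
  grad_spec : ∀ (x : EuclideanSpace ℝ (Fin n)) (t : ℝ), HasGradientAt (fun y => f y t) (grad x t) x
  hess_spec : ∀ (x : EuclideanSpace ℝ (Fin n)) (t : ℝ), HasFDerivAt (fun y => grad y t) (hess x t) x
  dtgrad_spec : ∀ (x : EuclideanSpace ℝ (Fin n)) (t : ℝ), HasDerivAt (fun s => grad x s) (dtgrad x t) t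
  d3_spec : ∀ (x : EuclideanSpace ℝ (Fin n)) (t : ℝ), HasFDerivAt (fun y => hess y t) (d3 x t) x
  dthess_spec : ∀ (x : EuclideanSpace ℝ (Fin n)) (t : ℝ), HasDerivAt (fun s => hess x s) (dthess x t) t
  dttgrad_spec : ∀ (x : EuclideanSpace ℝ (Fin n)) (t : ℝ), HasDerivAt (fun s => dtgrad x s) (dttgrad x t) t
  /-- Assumption 1: `∇ₓₓ f(x;t) ⪰ m·I` uniformly in `x` and `t`. -/
  strong_convex : ∀ (x : EuclideanSpace ℝ (Fin n)) (t : ℝ) (v : EuclideanSpace ℝ (Fin n)),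
    m * ‖v‖ ^ 2 ≤ @inner ℝ _ _ v (hess x t v)
  hessInv_left : ∀ (x : EuclideanSpace ℝ (Fin n)) (t : ℝ), ContinuousLinearMap.comp (hessInv x t) (hess x t) =
    ContinuousLinearMap.id ℝ (EuclideanSpace ℝ (Fin n))
  hessInv_right : ∀ (x : EuclideanSpace ℝ (Fin n)) (t : ℝ), ContinuousLinearMap.comp (hess x t) (hessInv x t) =
    ContinuousLinearMap.id ℝ (EuclideanSpace ℝ (Fin n))
  /-- Assumption 2: bounded derivatives, uniformly in `x` and `t`. -/
  hess_bound : ∀ (x : EuclideanSpace ℝ (Fin n)) (t : ℝ), ‖hess x t‖ ≤ L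
  dtgrad_bound : ∀ (x : EuclideanSpace ℝ (Fin n)) (t : ℝ), ‖dtgrad x t‖ ≤ C0
  d3_bound : ∀ (x : EuclideanSpace ℝ (Fin n)) (t : ℝ), ‖d3 x t‖ ≤ C1
  dthess_bound : ∀ (x : EuclideanSpace ℝ (Fin n)) (t : ℝ), ‖dthess x t‖ ≤ C2
  dttgrad_bound : ∀ (x : EuclideanSpace ℝ (Fin n)) (t : ℝ), ‖dttgrad x t‖ ≤ C3
  /-- `x*(t)` minimizes `f(·;t)` -/
  xstar_min : ∀ t : ℝ, IsMinOn (fun x => f x t) Set.univ (xstar t)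
  /-- equivalently, `∇ₓ f(x*(t);t) = 0` -/
  xstar_grad : ∀ t : ℝ, grad (xstar t) t = 0

open Set
open scoped RealInnerProductSpace

section General

variable {E : Type*} [NormedAddCommGroup E]

theorem le_pow_mul_add_geom_of_le_mul_add {a : ℕ → ℝ} {A B : ℝ} (hA0 : 0 ≤ A) (hA1 : A ≠ 1)
    (ha : ∀ k, a (k + 1) ≤ A * a k + B) (k : ℕ) :
    a k ≤ A ^ k * a 0 + B * ((1 - A ^ k) / (1 - A)) := by
  induction k with
  | zero => simp
  | succ k ih =>
    have h1A : 1 - A ≠ 0 := sub_ne_zero.mpr hA1.symm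
    calc a (k + 1) ≤ A * (A ^ k * a 0 + B * ((1 - A ^ k) / (1 - A))) + B := by
          nlinarith [ha k, mul_le_mul_of_nonneg_left ih hA0]
      _ = A ^ (k + 1) * a 0 + B * ((1 - A ^ (k + 1)) / (1 - A)) := by
          field_simp
          ring

theorem norm_iterate_sub_le_of_norm_sub_le {T : E → E} {p : E} {ρ : ℝ} (hρ : 0 ≤ ρ)
    (hT : ∀ y, ‖T y - p‖ ≤ ρ * ‖y - p‖) (k : ℕ) (y : E) :
    ‖T^[k] y - p‖ ≤ ρ ^ k * ‖y - p‖ := by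
  induction k with
  | zero => simp
  | succ k ih =>
    rw [Function.iterate_succ_apply', pow_succ', mul_assoc]
    exact (hT _).trans (mul_le_mul_of_nonneg_left ih hρ)

variable [NormedSpace ℝ E]

theorem norm_sub_le_of_forall_hasDerivAt_norm_le {f f' : ℝ → E} {C : ℝ}
    (hf : ∀ s, HasDerivAt f (f' s) s) (hC : ∀ s, ‖f' s‖ ≤ C) (s t : ℝ) :
    ‖f t - f s‖ ≤ C * |t - s| := by
  simpa [Real.norm_eq_abs] using convex_univ.norm_image_sub_le_of_norm_hasDerivWithin_le
    (fun r _ => (hf r).hasDerivWithinAt) (fun r _ => hC r) (mem_univ s) (mem_univ t)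

theorem norm_inv_smul_le_of_norm_le {v : E} {h C : ℝ} (hC : 0 ≤ C) (hv : ‖v‖ ≤ C * |h|) :
    ‖h⁻¹ • v‖ ≤ C := by
  rcases eq_or_ne h 0 with rfl | hh
  · simpa using hC
  · rwa [norm_smul, norm_inv, Real.norm_eq_abs, inv_mul_le_iff₀ (abs_pos.mpr hh), mul_comm]

theorem norm_sub_le_of_forall_hasFDerivAt_norm_le {F : Type*} [NormedAddCommGroup F]
    [NormedSpace ℝ F] {f : E → F} {f' : E → E →L[ℝ] F} {C : ℝ}
    (hf : ∀ z, HasFDerivAt f (f' z) z) (hC : ∀ z, ‖f' z‖ ≤ C) (x y : E) :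
    ‖f y - f x‖ ≤ C * ‖y - x‖ :=
  convex_univ.norm_image_sub_le_of_norm_hasFDerivWithin_le
    (fun z _ => (hf z).hasFDerivWithinAt) (fun z _ => hC z) (mem_univ x) (mem_univ y)

theorem norm_sub_sub_deriv_le_of_norm_deriv_sub_le {f f' : ℝ → E} {C : ℝ}
    (hf : ∀ r, HasDerivAt f (f' r) r) (hf' : ∀ r ∈ Icc (0 : ℝ) 1, ‖f' r - f' 0‖ ≤ C * r) :
    ‖f 1 - f 0 - f' 0‖ ≤ C / 2 := by
  let g : ℝ → E := fun r => f r - r • f' 0 - f 0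
  have hg : ∀ r, HasDerivAt g (f' r - f' 0) r := fun r =>
    (((hf r).sub ((hasDerivAt_id r).smul_const (f' 0))).sub_const (f 0)).congr_deriv
      (by rw [one_smul])
  have hB : ∀ r, HasDerivAt (fun r : ℝ => C / 2 * r ^ 2) (C * r) r := fun r =>
    ((hasDerivAt_pow 2 r).const_mul (C / 2)).congr_deriv (by push_cast; ring)
  have key := image_norm_le_of_norm_deriv_right_le_deriv_boundary (a := 0) (b := 1)
    (fun r _ => (hg r).continuousAt.continuousWithinAt) (fun r _ => (hg r).hasDerivWithinAt)
    (by simp [g]) hB (fun r hr => hf' r (Ico_subset_Icc_self hr)) (right_mem_Icc.mpr zero_le_one)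
  simpa [g, sub_right_comm] using key

end General

section InnerProduct

variable {E : Type*} [NormedAddCommGroup E] [InnerProductSpace ℝ E]

theorem mul_norm_le_norm_of_mul_sq_le_inner {m : ℝ} {u w : E} (h : m * ‖u‖ ^ 2 ≤ ⟪u, w⟫) :
    m * ‖u‖ ≤ ‖w‖ := by
  rcases (norm_nonneg u).eq_or_lt with hu | hu
  · rw [← hu]; simp
  · have := h.trans (real_inner_le_norm u w)
    nlinarith

theorem ContinuousLinearMap.norm_le_of_abs_inner_self_le {T : E →L[ℝ] E}
    (hT : (T : E →ₗ[ℝ] E).IsSymmetric) {c : ℝ} (hc : 0 ≤ c)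
    (h : ∀ x, |⟪T x, x⟫| ≤ c * ‖x‖ ^ 2) : ‖T‖ ≤ c := by
  rw [T.norm_eq_iSup_rayleighQuotient hT]
  refine ciSup_le fun x => ?_
  rw [rayleighQuotient, reApplyInnerSelf_apply, RCLike.re_to_real, abs_div, abs_sq]
  rcases (norm_nonneg x).eq_or_lt with hx | hx
  · rw [← hx]; simpa using hc
  · rw [div_le_iff₀ (by positivity)]
    exact h x

theorem inner_sub_sub_ge_of_hasFDerivAt {g : E → E} {g' : E → E →L[ℝ] E} {m : ℝ}
    (hg : ∀ z, HasFDerivAt g (g' z) z) (hm : ∀ z v, m * ‖v‖ ^ 2 ≤ ⟪v, g' z v⟫) (x y : E) :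
    m * ‖y - x‖ ^ 2 ≤ ⟪y - x, g y - g x⟫ := by
  set u := y - x
  let φ : ℝ → ℝ := fun r => ⟪u, g (x + r • u)⟫ - r * (m * ‖u‖ ^ 2)
  have hφ : ∀ r, HasDerivAt φ (⟪u, g' (x + r • u) u⟫ - m * ‖u‖ ^ 2) r := fun r => by
    have hline : HasDerivAt (fun r : ℝ => x + r • u) u r := by
      simpa using ((hasDerivAt_id r).smul_const u).const_add x
    exact (((innerSL ℝ u).hasFDerivAt.comp _ (hg _)).comp_hasDerivAt r hline).sub
      (by simpa using (hasDerivAt_id r).mul_const (m * ‖u‖ ^ 2))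
  have hmono : Monotone φ := monotone_of_deriv_nonneg (fun r => (hφ r).differentiableAt)
    fun r => by rw [(hφ r).deriv]; linarith [hm (x + r • u) u]
  have h01 := hmono zero_le_one
  simp only [φ, one_smul, zero_smul, add_zero, one_mul, zero_mul, sub_zero, u,
    add_sub_cancel] at h01
  rw [inner_sub_right]
  linarith

theorem inner_hasFDerivAt_gradient_comm [CompleteSpace E] {f : E → ℝ} {g : E → E}
    {H : E →L[ℝ] E} {x : E} (hf : ∀ y, HasGradientAt f (g y) y) (hg : HasFDerivAt g H x)
    (v w : E) : ⟪H v, w⟫ = ⟪v, H w⟫ := by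
  let D := (InnerProductSpace.toDual ℝ E).toContinuousLinearEquiv.toContinuousLinearMap
  have key := second_derivative_symmetric (fun y => (hf y).hasFDerivAt)
    (D.hasFDerivAt.comp x hg) v w
  simp only [ContinuousLinearMap.comp_apply, D] at key
  simpa [InnerProductSpace.toDual_apply_apply, real_inner_comm] using key

end InnerProduct

namespace TVOpt

variable {n : ℕ} (P : TVOpt n)

local notation "𝔼" => EuclideanSpace ℝ (Fin n)

def gradStep (γ t : ℝ) (y : 𝔼) : 𝔼 := y - γ • P.grad y t

/-- The backward difference `∇̃_{tx} f(x;t)` approximating the mixed derivative. -/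
def approxDtgrad (h : ℝ) (x : 𝔼) (t : ℝ) : 𝔼 := h⁻¹ • (P.grad x t - P.grad x (t - h))

/-- The prediction of exact gradient tracking (GT), which uses `∇_{tx} f` itself. -/
def gtPredict (h : ℝ) (x : 𝔼) (t : ℝ) : 𝔼 := x - h • P.hessInv x t (P.dtgrad x t)

def agtPredict (h : ℝ) (x : 𝔼) (t : ℝ) : 𝔼 := x - h • P.hessInv x t (P.approxDtgrad h x t)

theorem C0_nonneg : 0 ≤ P.C0 := (norm_nonneg _).trans (P.dtgrad_bound 0 0)
theorem C1_nonneg : 0 ≤ P.C1 := (norm_nonneg (P.d3 0 0)).trans (P.d3_bound 0 0)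
theorem C2_nonneg : 0 ≤ P.C2 := (norm_nonneg _).trans (P.dthess_bound 0 0)
theorem C3_nonneg : 0 ≤ P.C3 := (norm_nonneg _).trans (P.dttgrad_bound 0 0)

theorem inner_hess_le (x : 𝔼) (t : ℝ) (v : 𝔼) : ⟪v, P.hess x t v⟫ ≤ P.L * ‖v‖ ^ 2 :=
  calc ⟪v, P.hess x t v⟫ ≤ ‖v‖ * (‖P.hess x t‖ * ‖v‖) :=
        (real_inner_le_norm _ _).trans (by gcongr; exact (P.hess x t).le_opNorm v)
    _ ≤ ‖v‖ * (P.L * ‖v‖) := by gcongr; exact P.hess_bound x t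
    _ = P.L * ‖v‖ ^ 2 := by ring

theorem norm_id_sub_smul_hess_le (γ : ℝ) (x : 𝔼) (t : ℝ) :
    ‖ContinuousLinearMap.id ℝ 𝔼 - γ • P.hess x t‖ ≤ max |1 - γ * P.m| |1 - γ * P.L| := by
  have hsymm : ∀ v w, ⟪P.hess x t v, w⟫ = ⟪v, P.hess x t w⟫ :=
    inner_hasFDerivAt_gradient_comm (P.grad_spec · t) (P.hess_spec x t)
  refine ContinuousLinearMap.norm_le_of_abs_inner_self_le (fun v w => ?_)
    ((abs_nonneg _).trans (le_max_left _ _)) fun v => ?_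
  · simp [inner_sub_left, inner_sub_right, real_inner_smul_left, real_inner_smul_right, hsymm]
  · have hq : ⟪(ContinuousLinearMap.id ℝ 𝔼 - γ • P.hess x t) v, v⟫
        = ‖v‖ ^ 2 - γ * ⟪v, P.hess x t v⟫ := by
      simp [inner_sub_left, real_inner_smul_right, real_inner_comm]
    -- the Rayleigh quotient of `id - γ H` is `1 - γλ` with `λ ∈ [m, L]`,
    -- hence between `1 - γm` and `1 - γL`
    have hm := P.strong_convex x t v
    have hL := P.inner_hess_le x t v
    rw [hq, abs_le]
    rcases le_total 0 γ with hγ | hγ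
    · constructor <;> nlinarith [neg_abs_le (1 - γ * P.L), le_abs_self (1 - γ * P.m),
        le_max_left |1 - γ * P.m| |1 - γ * P.L|, le_max_right |1 - γ * P.m| |1 - γ * P.L|,
        mul_le_mul_of_nonneg_left hm hγ, mul_le_mul_of_nonneg_left hL hγ, sq_nonneg ‖v‖]
    · constructor <;> nlinarith [neg_abs_le (1 - γ * P.m), le_abs_self (1 - γ * P.L),
        le_max_left |1 - γ * P.m| |1 - γ * P.L|, le_max_right |1 - γ * P.m| |1 - γ * P.L|,
        mul_le_mul_of_nonpos_left hm hγ, mul_le_mul_of_nonpos_left hL hγ, sq_nonneg ‖v‖]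

theorem norm_gradStep_sub_xstar_le (γ t : ℝ) (y : 𝔼) :
    ‖P.gradStep γ t y - P.xstar t‖ ≤ max |1 - γ * P.m| |1 - γ * P.L| * ‖y - P.xstar t‖ := by
  have hfix : P.gradStep γ t (P.xstar t) = P.xstar t := by simp [gradStep, P.xstar_grad t]
  simpa only [hfix] using norm_sub_le_of_forall_hasFDerivAt_norm_le (f := P.gradStep γ t)
    (fun z => (hasFDerivAt_id z).sub ((P.hess_spec z t).const_smul γ))
    (P.norm_id_sub_smul_hess_le γ · t) (P.xstar t) y

theorem norm_iterate_gradStep_sub_xstar_le (γ t : ℝ) (τ : ℕ) (y : 𝔼) :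
    ‖(P.gradStep γ t)^[τ] y - P.xstar t‖
      ≤ max |1 - γ * P.m| |1 - γ * P.L| ^ τ * ‖y - P.xstar t‖ :=
  norm_iterate_sub_le_of_norm_sub_le ((abs_nonneg _).trans (le_max_left _ _))
    (P.norm_gradStep_sub_xstar_le γ t) τ y

theorem norm_hess_sub_le (t : ℝ) (x y : 𝔼) : ‖P.hess y t - P.hess x t‖ ≤ P.C1 * ‖y - x‖ :=
  norm_sub_le_of_forall_hasFDerivAt_norm_le (P.d3_spec · t) (P.d3_bound · t) x y

theorem norm_hess_time_sub_le (x : 𝔼) (s t : ℝ) :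
    ‖P.hess x t - P.hess x s‖ ≤ P.C2 * |t - s| :=
  norm_sub_le_of_forall_hasDerivAt_norm_le (P.dthess_spec x) (P.dthess_bound x) s t

theorem norm_grad_time_sub_le (x : 𝔼) (s t : ℝ) :
    ‖P.grad x t - P.grad x s‖ ≤ P.C0 * |t - s| :=
  norm_sub_le_of_forall_hasDerivAt_norm_le (P.dtgrad_spec x) (P.dtgrad_bound x) s t

theorem norm_dtgrad_time_sub_le (x : 𝔼) (s t : ℝ) :
    ‖P.dtgrad x t - P.dtgrad x s‖ ≤ P.C3 * |t - s| :=
  norm_sub_le_of_forall_hasDerivAt_norm_le (P.dttgrad_spec x) (P.dttgrad_bound x) s t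

theorem norm_grad_time_taylor_le (x : 𝔼) (t s : ℝ) :
    ‖P.grad x (t + s) - P.grad x t - s • P.dtgrad x t‖ ≤ P.C3 * s ^ 2 / 2 := by
  have hline : ∀ r : ℝ, HasDerivAt (fun r : ℝ => t + r * s) s r := fun r => by
    simpa using ((hasDerivAt_id r).mul_const s).const_add t
  have key := norm_sub_sub_deriv_le_of_norm_deriv_sub_le (C := P.C3 * s ^ 2)
    (fun r => (P.dtgrad_spec x (t + r * s)).scomp r (hline r)) fun r hr => by
      rw [← smul_sub, norm_smul, Real.norm_eq_abs]
      calc |s| * ‖P.dtgrad x (t + r * s) - P.dtgrad x (t + 0 * s)‖ ≤ |s| * (P.C3 * |r * s|) := by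
            gcongr
            simpa using P.norm_dtgrad_time_sub_le x (t + 0 * s) (t + r * s)
        _ = P.C3 * s ^ 2 * r := by
            rw [abs_mul, abs_of_nonneg hr.1, ← sq_abs s]; ring
  simpa using key

theorem norm_grad_space_taylor_le (x u : 𝔼) (t : ℝ) :
    ‖P.grad (x + u) t - P.grad x t - P.hess x t u‖ ≤ P.C1 * ‖u‖ ^ 2 / 2 := by
  have hline : ∀ r : ℝ, HasDerivAt (fun r : ℝ => x + r • u) u r := fun r => by
    simpa using ((hasDerivAt_id r).smul_const u).const_add x
  have key := norm_sub_sub_deriv_le_of_norm_deriv_sub_le (C := P.C1 * ‖u‖ ^ 2)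
    (fun r => (P.hess_spec (x + r • u) t).comp_hasDerivAt r (hline r)) fun r hr => by
      rw [← sub_apply]
      calc ‖(P.hess (x + r • u) t - P.hess (x + (0 : ℝ) • u) t) u‖
          ≤ P.C1 * ‖r • u‖ * ‖u‖ := by
            refine ((P.hess (x + r • u) t - P.hess (x + (0 : ℝ) • u) t).le_opNorm u).trans ?_
            gcongr
            simpa using P.norm_hess_sub_le t x (x + r • u)
        _ = P.C1 * ‖u‖ ^ 2 * r := by
            rw [norm_smul, Real.norm_eq_abs, abs_of_nonneg hr.1]; ring
  simpa using key

theorem mul_norm_sub_xstar_le_norm_grad (t : ℝ) (y : 𝔼) :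
    P.m * ‖y - P.xstar t‖ ≤ ‖P.grad y t‖ := by
  have := inner_sub_sub_ge_of_hasFDerivAt (P.hess_spec · t) (P.strong_convex · t) (P.xstar t) y
  rw [P.xstar_grad, sub_zero] at this
  exact mul_norm_le_norm_of_mul_sq_le_inner this

theorem hess_hessInv_apply (x : 𝔼) (t : ℝ) (w : 𝔼) : P.hess x t (P.hessInv x t w) = w :=
  DFunLike.congr_fun (P.hessInv_right x t) w

theorem hessInv_hess_apply (x : 𝔼) (t : ℝ) (w : 𝔼) : P.hessInv x t (P.hess x t w) = w :=
  DFunLike.congr_fun (P.hessInv_left x t) w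

theorem norm_hessInv_apply_le (x : 𝔼) (t : ℝ) (w : 𝔼) : ‖P.hessInv x t w‖ ≤ ‖w‖ / P.m := by
  rw [le_div_iff₀ P.m_pos, mul_comm]
  simpa [P.hess_hessInv_apply] using
    mul_norm_le_norm_of_mul_sq_le_inner (P.strong_convex x t (P.hessInv x t w))

theorem norm_hessInv_sub_hessInv_apply_le (t : ℝ) (x y w : 𝔼) :
    ‖P.hessInv y t w - P.hessInv x t w‖ ≤ P.C1 / P.m ^ 2 * ‖y - x‖ * ‖w‖ := by
  -- the resolvent identity `H_y⁻¹ - H_x⁻¹ = H_y⁻¹ (H_x - H_y) H_x⁻¹`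
  have hres : P.hessInv y t w - P.hessInv x t w
      = P.hessInv y t ((P.hess x t - P.hess y t) (P.hessInv x t w)) := by
    rw [sub_apply, map_sub, P.hess_hessInv_apply, P.hessInv_hess_apply]
  have hm := P.m_pos
  have hC1 := P.C1_nonneg
  calc ‖P.hessInv y t w - P.hessInv x t w‖
      ≤ ‖P.hess x t - P.hess y t‖ * ‖P.hessInv x t w‖ / P.m := by
        rw [hres]
        exact (P.norm_hessInv_apply_le _ _ _).trans
          (by gcongr; exact ContinuousLinearMap.le_opNorm _ _)
    _ ≤ P.C1 * ‖y - x‖ * (‖w‖ / P.m) / P.m := by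
        gcongr
        · rw [norm_sub_rev]; exact P.norm_hess_sub_le t x y
        · exact P.norm_hessInv_apply_le x t w
    _ = P.C1 / P.m ^ 2 * ‖y - x‖ * ‖w‖ := by field_simp

theorem norm_approxDtgrad_le (h : ℝ) (x : 𝔼) (t : ℝ) : ‖P.approxDtgrad h x t‖ ≤ P.C0 :=
  norm_inv_smul_le_of_norm_le P.C0_nonneg (by simpa using P.norm_grad_time_sub_le x (t - h) t)

theorem norm_approxDtgrad_sub_dtgrad_le {h : ℝ} (hh : h ≠ 0) (x : 𝔼) (t : ℝ) :
    ‖P.approxDtgrad h x t - P.dtgrad x t‖ ≤ P.C3 * |h| / 2 := by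
  have hrw : P.approxDtgrad h x t - P.dtgrad x t
      = -(h⁻¹ • (P.grad x (t + -h) - P.grad x t - (-h) • P.dtgrad x t)) := by
    simp only [approxDtgrad, ← sub_eq_add_neg, neg_smul, sub_neg_eq_add, smul_add, smul_sub,
      smul_smul, inv_mul_cancel₀ hh, one_smul]
    abel
  rw [hrw, norm_neg]
  refine norm_inv_smul_le_of_norm_le (by have := P.C3_nonneg; positivity) ?_
  calc _ ≤ P.C3 * (-h) ^ 2 / 2 := P.norm_grad_time_taylor_le x t (-h)
    _ = P.C3 * |h| / 2 * |h| := by rw [neg_sq, ← sq_abs]; ring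

theorem norm_approxDtgrad_sub_approxDtgrad_le (h : ℝ) (x y : 𝔼) (t : ℝ) :
    ‖P.approxDtgrad h y t - P.approxDtgrad h x t‖ ≤ P.C2 * ‖y - x‖ :=
  norm_sub_le_of_forall_hasFDerivAt_norm_le (f := (P.approxDtgrad h · t))
    (fun z => ((P.hess_spec z t).sub (P.hess_spec z (t - h))).const_smul h⁻¹)
    (fun z => norm_inv_smul_le_of_norm_le P.C2_nonneg
      (by simpa using P.norm_hess_time_sub_le z (t - h) t)) x y

theorem norm_agtPredict_sub_agtPredict_le {h : ℝ} (hh : 0 ≤ h) (x y : 𝔼) (t : ℝ) :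
    ‖P.agtPredict h y t - P.agtPredict h x t‖
      ≤ (1 + h * (P.C0 * P.C1 / P.m ^ 2 + P.C2 / P.m)) * ‖y - x‖ := by
  have hm := P.m_pos
  set D := (P.approxDtgrad h · t)
  have hsplit : P.agtPredict h y t - P.agtPredict h x t = (y - x)
      - h • P.hessInv y t (D y - D x) - h • (P.hessInv y t (D x) - P.hessInv x t (D x)) := by
    simp only [agtPredict, D, map_sub, smul_sub]
    abel
  have hD : ‖P.hessInv y t (D y - D x)‖ ≤ P.C2 * ‖y - x‖ / P.m :=
    (P.norm_hessInv_apply_le y t _).trans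
      (by gcongr; exact P.norm_approxDtgrad_sub_approxDtgrad_le h x y t)
  have hInv : ‖P.hessInv y t (D x) - P.hessInv x t (D x)‖ ≤ P.C1 / P.m ^ 2 * ‖y - x‖ * P.C0 :=
    (P.norm_hessInv_sub_hessInv_apply_le t x y _).trans
      (by have := P.C1_nonneg; gcongr; exact P.norm_approxDtgrad_le h x t)
  calc ‖P.agtPredict h y t - P.agtPredict h x t‖
      ≤ ‖y - x‖ + ‖h • P.hessInv y t (D y - D x)‖
        + ‖h • (P.hessInv y t (D x) - P.hessInv x t (D x))‖ := by
        rw [hsplit]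
        exact (norm_sub_le _ _).trans (add_le_add_left (norm_sub_le _ _) _)
    _ = ‖y - x‖ + h * ‖P.hessInv y t (D y - D x)‖
        + h * ‖P.hessInv y t (D x) - P.hessInv x t (D x)‖ := by
        rw [norm_smul, norm_smul, Real.norm_of_nonneg hh]
    _ ≤ ‖y - x‖ + h * (P.C2 * ‖y - x‖ / P.m) + h * (P.C1 / P.m ^ 2 * ‖y - x‖ * P.C0) := by
        gcongr
    _ = (1 + h * (P.C0 * P.C1 / P.m ^ 2 + P.C2 / P.m)) * ‖y - x‖ := by ring

theorem norm_agtPredict_sub_gtPredict_le {h : ℝ} (hh : 0 < h) (x : 𝔼) (t : ℝ) :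
    ‖P.agtPredict h x t - P.gtPredict h x t‖ ≤ h ^ 2 / 2 * (P.C3 / P.m) := by
  have hm := P.m_pos
  have hrw : P.agtPredict h x t - P.gtPredict h x t
      = h • P.hessInv x t (P.dtgrad x t - P.approxDtgrad h x t) := by
    simp only [agtPredict, gtPredict, map_sub, smul_sub]
    abel
  calc ‖P.agtPredict h x t - P.gtPredict h x t‖
      ≤ h * (‖P.dtgrad x t - P.approxDtgrad h x t‖ / P.m) := by
        rw [hrw, norm_smul, Real.norm_of_nonneg hh.le]
        gcongr
        exact P.norm_hessInv_apply_le x t _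
    _ ≤ h * (P.C3 * h / 2 / P.m) := by
        gcongr
        rw [norm_sub_rev]
        exact (P.norm_approxDtgrad_sub_dtgrad_le hh.ne' x t).trans_eq (by rw [abs_of_pos hh])
    _ = h ^ 2 / 2 * (P.C3 / P.m) := by ring

theorem norm_grad_gtPredict_xstar_le {h : ℝ} (hh : 0 ≤ h) (t : ℝ) :
    ‖P.grad (P.gtPredict h (P.xstar t) t) (t + h)‖
      ≤ h ^ 2 / 2 * (P.C0 ^ 2 * P.C1 / P.m ^ 2 + 2 * P.C0 * P.C2 / P.m + P.C3) := by
  have hm := P.m_pos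
  have hC1 := P.C1_nonneg
  have hC2 := P.C2_nonneg
  set X := P.xstar t
  set g := P.dtgrad X t
  set u := -(h • P.hessInv X t g) with hu
  have hu_norm : ‖u‖ ≤ h * P.C0 / P.m := by
    rw [hu, norm_neg, norm_smul, Real.norm_of_nonneg hh, mul_div_assoc]
    gcongr
    exact (P.norm_hessInv_apply_le X t g).trans (by gcongr; exact P.dtgrad_bound X t)
  -- the first-order terms cancel, since `∇ₓ f(X;t) = 0` and `∇ₓₓ f(X;t) u = -h g`
  have hcancel : P.grad X t + P.hess X t u + h • g = 0 := by
    rw [hu, map_neg, map_smul, P.hess_hessInv_apply, show P.grad X t = 0 from P.xstar_grad t]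
    abel
  have hsplit : P.grad (P.gtPredict h X t) (t + h)
      = (P.grad (X + u) (t + h) - P.grad X (t + h) - P.hess X (t + h) u)
        + (P.hess X (t + h) - P.hess X t) u + (P.grad X (t + h) - P.grad X t - h • g) := by
    rw [show P.gtPredict h X t = X + u from sub_eq_add_neg _ _, sub_apply, ← sub_eq_zero,
      ← hcancel]
    abel
  have hB : ‖(P.hess X (t + h) - P.hess X t) u‖ ≤ P.C2 * h * ‖u‖ :=
    (ContinuousLinearMap.le_opNorm _ _).trans (by
      gcongr
      simpa [abs_of_nonneg hh] using P.norm_hess_time_sub_le X t (t + h))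
  calc ‖P.grad (P.gtPredict h X t) (t + h)‖
      ≤ P.C1 * ‖u‖ ^ 2 / 2 + P.C2 * h * ‖u‖ + P.C3 * h ^ 2 / 2 := by
        rw [hsplit]
        exact norm_add₃_le.trans (add_le_add_three (P.norm_grad_space_taylor_le X u (t + h)) hB
          (P.norm_grad_time_taylor_le X t h))
    _ ≤ P.C1 * (h * P.C0 / P.m) ^ 2 / 2 + P.C2 * h * (h * P.C0 / P.m) + P.C3 * h ^ 2 / 2 := by
        gcongr
    _ = h ^ 2 / 2 * (P.C0 ^ 2 * P.C1 / P.m ^ 2 + 2 * P.C0 * P.C2 / P.m + P.C3) := by ring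

theorem norm_gtPredict_xstar_sub_xstar_le {h : ℝ} (hh : 0 ≤ h) (t : ℝ) :
    ‖P.gtPredict h (P.xstar t) t - P.xstar (t + h)‖
      ≤ h ^ 2 / 2 * (P.C0 ^ 2 * P.C1 / P.m ^ 3 + 2 * P.C0 * P.C2 / P.m ^ 2 + P.C3 / P.m) := by
  have hm := P.m_pos
  calc ‖P.gtPredict h (P.xstar t) t - P.xstar (t + h)‖
      ≤ ‖P.grad (P.gtPredict h (P.xstar t) t) (t + h)‖ / P.m := by
        rw [le_div_iff₀' hm]
        exact P.mul_norm_sub_xstar_le_norm_grad (t + h) _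
    _ ≤ h ^ 2 / 2 * (P.C0 ^ 2 * P.C1 / P.m ^ 2 + 2 * P.C0 * P.C2 / P.m + P.C3) / P.m := by
        gcongr
        exact P.norm_grad_gtPredict_xstar_le hh t
    _ = _ := by ring

theorem norm_agtPredict_sub_xstar_le {h : ℝ} (hh : 0 < h) (y : 𝔼) (t : ℝ) :
    ‖P.agtPredict h y t - P.xstar (t + h)‖
      ≤ (1 + h * (P.C0 * P.C1 / P.m ^ 2 + P.C2 / P.m)) * ‖y - P.xstar t‖
        + h ^ 2 / 2 * (P.C0 ^ 2 * P.C1 / P.m ^ 3 + 2 * P.C0 * P.C2 / P.m ^ 2 + 2 * P.C3 / P.m) := by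
  set X := P.xstar t
  calc ‖P.agtPredict h y t - P.xstar (t + h)‖
      = ‖(P.agtPredict h y t - P.agtPredict h X t) + (P.agtPredict h X t - P.gtPredict h X t)
          + (P.gtPredict h X t - P.xstar (t + h))‖ := by congr 1; abel
    _ ≤ (1 + h * (P.C0 * P.C1 / P.m ^ 2 + P.C2 / P.m)) * ‖y - X‖ + h ^ 2 / 2 * (P.C3 / P.m)
          + h ^ 2 / 2 * (P.C0 ^ 2 * P.C1 / P.m ^ 3 + 2 * P.C0 * P.C2 / P.m ^ 2 + P.C3 / P.m) :=
        norm_add₃_le.trans (add_le_add_three (P.norm_agtPredict_sub_agtPredict_le hh.le X y t)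
          (P.norm_agtPredict_sub_gtPredict_le hh X t) (P.norm_gtPredict_xstar_sub_xstar_le hh.le t))
    _ = _ := by ring

end TVOpt

theorem agt_convergence_small_period_general (n : ℕ) (P : TVOpt n) (h : ℝ) (hh : 0 < h)
    (γ : ℝ) (τ : ℕ) (hτ : 1 ≤ τ)
    (ρ : ℝ) (hρ : ρ = max |1 - γ * P.m| |1 - γ * P.L|)
    (σ : ℝ) (hσ : σ = 1 + h * (P.C0 * P.C1 / P.m ^ 2 + P.C2 / P.m))
    (hsmall : ρ ^ τ * σ < 1)
    (x : ℕ → EuclideanSpace ℝ (Fin n))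
    (hrec : ∀ k : ℕ, x (k + 1) =
      (fun y => y - γ • P.grad y (((k : ℝ) + 1) * h))^[τ]
        (x k - h • P.hessInv (x k) ((k : ℝ) * h)
          (h⁻¹ • (P.grad (x k) ((k : ℝ) * h) - P.grad (x k) ((k : ℝ) * h - h))))) :
    ρ < 1 ∧ ∀ k : ℕ,
      ‖x k - P.xstar ((k : ℝ) * h)‖ ≤
        (ρ ^ τ * σ) ^ k * ‖x 0 - P.xstar 0‖ +
        ρ ^ τ * (h ^ 2 / 2) *
          (P.C0 ^ 2 * P.C1 / P.m ^ 3 + 2 * P.C0 * P.C2 / P.m ^ 2 + 2 * P.C3 / P.m) *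
          ((1 - (ρ ^ τ * σ) ^ k) / (1 - ρ ^ τ * σ)) := by
  have hρ0 : 0 ≤ ρ := hρ ▸ (abs_nonneg _).trans (le_max_left _ _)
  have hσ1 : 1 ≤ σ := by
    have := P.m_pos; have := P.C0_nonneg; have := P.C1_nonneg; have := P.C2_nonneg
    rw [hσ, le_add_iff_nonneg_right]
    positivity
  have hρτ : ρ ^ τ < 1 := (le_mul_of_one_le_right (pow_nonneg hρ0 τ) hσ1).trans_lt hsmall
  have hstep : ∀ k : ℕ, ‖x (k + 1) - P.xstar (↑(k + 1) * h)‖ ≤ ρ ^ τ * σ *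
      ‖x k - P.xstar (k * h)‖ + ρ ^ τ * (h ^ 2 / 2) *
        (P.C0 ^ 2 * P.C1 / P.m ^ 3 + 2 * P.C0 * P.C2 / P.m ^ 2 + 2 * P.C3 / P.m) := fun k => by
    rw [hrec k, show ((k : ℝ) + 1) * h = k * h + h by ring, Nat.cast_succ, add_one_mul]
    calc _ ≤ ρ ^ τ * ‖P.agtPredict h (x k) (k * h) - P.xstar (k * h + h)‖ :=
          hρ ▸ P.norm_iterate_gradStep_sub_xstar_le γ _ τ _
      _ ≤ ρ ^ τ * (σ * ‖x k - P.xstar (k * h)‖ + h ^ 2 / 2 *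
          (P.C0 ^ 2 * P.C1 / P.m ^ 3 + 2 * P.C0 * P.C2 / P.m ^ 2 + 2 * P.C3 / P.m)) :=
          hσ ▸ mul_le_mul_of_nonneg_left (P.norm_agtPredict_sub_xstar_le hh _ _) (pow_nonneg hρ0 τ)
      _ = _ := by ring
  refine ⟨(pow_lt_one_iff_of_nonneg hρ0 (by omega)).mp hρτ, fun k => ?_⟩
  simpa using le_pow_mul_add_geom_of_le_mul_add (a := fun k => ‖x k - P.xstar (k * h)‖)
    (mul_nonneg (pow_nonneg hρ0 τ) (by linarith)) hsmall.ne hstep k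

/-- **Theorem 3, part ii.** If moreover `ρ^τ·σ < 1`, AGT converges
exponentially up to an `O(h²)` error. -/
theorem agt_convergence_small_period (n : ℕ) (hn : 0 < n) (P : TVOpt n) (h : ℝ) (hh : 0 < h)
    (γ : ℝ) (τ : ℕ) (hτ : 1 ≤ τ) (hγ0 : 0 < γ) (hγL : γ < 2 / P.L)
    (ρ : ℝ) (hρ : ρ = max |1 - γ * P.m| |1 - γ * P.L|)
    (σ : ℝ) (hσ : σ = 1 + h * (P.C0 * P.C1 / P.m ^ 2 + P.C2 / P.m))
    (hsmall : ρ ^ τ * σ < 1)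
    (x : ℕ → EuclideanSpace ℝ (Fin n))
    (hrec : ∀ k : ℕ, x (k + 1) =
      (fun y => y - γ • P.grad y (((k : ℝ) + 1) * h))^[τ]
        (x k - h • P.hessInv (x k) ((k : ℝ) * h)
          (h⁻¹ • (P.grad (x k) ((k : ℝ) * h) - P.grad (x k) ((k : ℝ) * h - h))))) :
    ρ < 1 ∧ ∀ k : ℕ,
      ‖x k - P.xstar ((k : ℝ) * h)‖ ≤
        (ρ ^ τ * σ) ^ k * ‖x 0 - P.xstar 0‖ +
        ρ ^ τ * (h ^ 2 / 2) *
          (P.C0 ^ 2 * P.C1 / P.m ^ 3 + 2 * P.C0 * P.C2 / P.m ^ 2 + 2 * P.C3 / P.m) *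
          ((1 - (ρ ^ τ * σ) ^ k) / (1 - ρ ^ τ * σ)) :=
  agt_convergence_small_period_general n P h hh γ τ hτ ρ hρ σ hσ hsmall x hrec
end
end

section
/- Under Assumptions 1 and 2, the prediction direction F(x,t) := [∇ₓₓ f(x;t)]⁻¹ ∇_{tx} f(x;t) is Lipschitz in x with explicit constant: for every t, every x ∈ ℝⁿ, and x* = x*(t) the minimizer of f(·;t), ‖[∇ₓₓ f(x;t)]⁻¹ ∇_{tx} f(x;t) − [∇ₓₓ f(x*;t)]⁻¹ ∇_{tx} f(x*;t)‖ ≤ (C₀C₁/m² + C₂/m)·‖x − x*‖. -/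
noncomputable section

lemma TVOptAux.hessInv_norm_le {n : ℕ}
    (m : ℝ) (hm : 0 < m)
    (A B : EuclideanSpace ℝ (Fin n) →L[ℝ] EuclideanSpace ℝ (Fin n))
    (hsc : ∀ v : EuclideanSpace ℝ (Fin n), m * ‖v‖ ^ 2 ≤ @inner ℝ _ _ v (A v))
    (hright : A.comp B = ContinuousLinearMap.id ℝ (EuclideanSpace ℝ (Fin n)))
    (v : EuclideanSpace ℝ (Fin n)) : ‖B v‖ ≤ ‖v‖ / m := by
  set u := B v with hu
  have hAu : A u = v := by
    have := congrArg (fun T => T v) hright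
    simpa using this
  have h1 : m * ‖u‖ ^ 2 ≤ @inner ℝ _ _ u v := by
    have := hsc u; rwa [hAu] at this
  have h2 : @inner ℝ _ _ u v ≤ ‖u‖ * ‖v‖ := real_inner_le_norm u v
  have h3 : m * ‖u‖ ^ 2 ≤ ‖u‖ * ‖v‖ := h1.trans h2
  rcases eq_or_lt_of_le (norm_nonneg u) with h | h
  · rw [← h]; positivity
  · rw [le_div_iff₀ hm]
    nlinarith [h3]

/-- Lipschitzness from a uniformly bounded derivative, everywhere on `univ`. -/
lemma TVOptAux.lip_of_fderiv {n : ℕ} {F : Type*} [NormedAddCommGroup F] [NormedSpace ℝ F]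
    (g : EuclideanSpace ℝ (Fin n) → F)
    (g' : EuclideanSpace ℝ (Fin n) → EuclideanSpace ℝ (Fin n) →L[ℝ] F)
    (hg : ∀ y, HasFDerivAt g (g' y) y) {C : ℝ} (hC : ∀ y, ‖g' y‖ ≤ C)
    (x y : EuclideanSpace ℝ (Fin n)) : ‖g x - g y‖ ≤ C * ‖x - y‖ := by
  apply (convex_univ (𝕜 := ℝ)).norm_image_sub_le_of_norm_hasFDerivWithin_le
    (fun z _ => (hg z).hasFDerivWithinAt) (fun z _ => hC z) (Set.mem_univ y) (Set.mem_univ x)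

lemma TVOptAux.lip_of_deriv {F : Type*} [NormedAddCommGroup F] [NormedSpace ℝ F]
    (g : ℝ → F) (g' : ℝ → F)
    (hg : ∀ s, HasDerivAt g (g' s) s) {C : ℝ} (hC : ∀ s, ‖g' s‖ ≤ C)
    (s t : ℝ) : ‖g s - g t‖ ≤ C * ‖s - t‖ := by
  apply (convex_univ (𝕜 := ℝ)).norm_image_sub_le_of_norm_hasDerivWithin_le
    (fun z _ => (hg z).hasDerivWithinAt) (fun z _ => hC z) (Set.mem_univ t) (Set.mem_univ s)

lemma TVOptAux.dtgrad_lip {n : ℕ} (P : TVOpt n) (t : ℝ) (x y : EuclideanSpace ℝ (Fin n)) :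
    ‖P.dtgrad x t - P.dtgrad y t‖ ≤ P.C2 * ‖x - y‖ := by
  -- For each s, the map z ↦ grad z s - grad z t has derivative hess z s - hess z t,
  -- whose norm is ≤ C2 * |s - t|.
  have hψ : ∀ s, ‖(P.grad x s - P.grad x t) - (P.grad y s - P.grad y t)‖
      ≤ (P.C2 * ‖s - t‖) * ‖x - y‖ := by
    intro s
    apply TVOptAux.lip_of_fderiv (fun z => P.grad z s - P.grad z t)
      (fun z => P.hess z s - P.hess z t)
      (fun z => (P.hess_spec z s).sub (P.hess_spec z t))
    intro z
    exact TVOptAux.lip_of_deriv (fun u => P.hess z u) (fun u => P.dthess z u)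
      (fun u => P.dthess_spec z u) (fun u => P.dthess_bound z u) s t
  -- now a slope limit argument
  have hD : HasDerivAt (fun s => P.grad x s - P.grad y s)
      (P.dtgrad x t - P.dtgrad y t) t := (P.dtgrad_spec x t).sub (P.dtgrad_spec y t)
  rw [hasDerivAt_iff_tendsto_slope] at hD
  have htend : Filter.Tendsto (fun s => ‖slope (fun s => P.grad x s - P.grad y s) t s‖)
      (nhdsWithin t {t}ᶜ) (nhds ‖P.dtgrad x t - P.dtgrad y t‖) :=
    (continuous_norm.tendsto _).comp hD
  refine le_of_tendsto htend ?_
  filter_upwards [self_mem_nhdsWithin] with s hs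
  have hst : s - t ≠ 0 := sub_ne_zero.mpr hs
  rw [slope_def_module, norm_smul, norm_inv]
  have := hψ s
  calc ‖(s - t)‖⁻¹ * ‖(P.grad x s - P.grad y s) - (P.grad x t - P.grad y t)‖
      ≤ ‖(s - t)‖⁻¹ * ((P.C2 * ‖s - t‖) * ‖x - y‖) := by
        apply mul_le_mul_of_nonneg_left _ (by positivity)
        calc ‖(P.grad x s - P.grad y s) - (P.grad x t - P.grad y t)‖
            = ‖(P.grad x s - P.grad x t) - (P.grad y s - P.grad y t)‖ := by congr 1; abel
          _ ≤ (P.C2 * ‖s - t‖) * ‖x - y‖ := hψ s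
    _ = P.C2 * ‖x - y‖ := by
        field_simp

/-- The prediction direction `F(x,t) = [∇ₓₓ f(x;t)]⁻¹ ∇_tx f(x;t)` is
Lipschitz between any point `x` and the minimizer `x*(t)`, with explicit constant
`C₀C₁/m² + C₂/m`. -/
theorem prediction_direction_lipschitz (n : ℕ) (P : TVOpt n) :
    ∀ (t : ℝ) (x : EuclideanSpace ℝ (Fin n)),
      ‖P.hessInv x t (P.dtgrad x t) -
          P.hessInv (P.xstar t) t (P.dtgrad (P.xstar t) t)‖ ≤
        (P.C0 * P.C1 / P.m ^ 2 + P.C2 / P.m) * ‖x - P.xstar t‖ := by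
  intro t x
  set xs := P.xstar t with hxs
  have hm := P.m_pos
  have hC0 : 0 ≤ P.C0 := (norm_nonneg (P.dtgrad x t)).trans (P.dtgrad_bound x t)
  have hC1 : 0 ≤ P.C1 := (norm_nonneg (P.d3 x t)).trans (P.d3_bound x t)
  have hC2 : 0 ≤ P.C2 := (norm_nonneg (P.dthess x t)).trans (P.dthess_bound x t)
  have hinv : ∀ (z : EuclideanSpace ℝ (Fin n)) (v : EuclideanSpace ℝ (Fin n)),
      ‖P.hessInv z t v‖ ≤ ‖v‖ / P.m := fun z v =>
    TVOptAux.hessInv_norm_le P.m hm (P.hess z t) (P.hessInv z t)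
      (fun v => P.strong_convex z t v) (P.hessInv_right z t) v
  have hhl : ‖P.hess xs t - P.hess x t‖ ≤ P.C1 * ‖x - xs‖ := by
    rw [← norm_sub_rev xs x]
    exact TVOptAux.lip_of_fderiv (fun z => P.hess z t) (fun z => P.d3 z t)
      (fun z => P.d3_spec z t) (fun z => P.d3_bound z t) xs x
  have hdl : ‖P.dtgrad x t - P.dtgrad xs t‖ ≤ P.C2 * ‖x - xs‖ :=
    TVOptAux.dtgrad_lip P t x xs
  set b := P.hessInv xs t (P.dtgrad xs t) with hb
  have hbnorm : ‖b‖ ≤ P.C0 / P.m := by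
    calc ‖b‖ ≤ ‖P.dtgrad xs t‖ / P.m := hinv xs _
      _ ≤ P.C0 / P.m := by
          apply div_le_div_of_nonneg_right (P.dtgrad_bound xs t) hm.le
  have key : P.hessInv x t (P.dtgrad x t) - b =
      P.hessInv x t (P.dtgrad x t - P.dtgrad xs t) +
      P.hessInv x t ((P.hess xs t - P.hess x t) b) := by
    have h1 : P.hess xs t b = P.dtgrad xs t := by
      have := congrArg (fun T => T (P.dtgrad xs t)) (P.hessInv_right xs t)
      simpa [hb] using this
    have h2 : P.hessInv x t (P.hess x t b) = b := by
      have := congrArg (fun T => T b) (P.hessInv_left x t)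
      simpa using this
    rw [ContinuousLinearMap.sub_apply, map_sub, map_sub, h1, h2]
    abel
  rw [key]
  have hA : ‖P.hessInv x t (P.dtgrad x t - P.dtgrad xs t)‖ ≤ P.C2 * ‖x - xs‖ / P.m :=
    (hinv x _).trans (div_le_div_of_nonneg_right hdl hm.le)
  have hB : ‖P.hessInv x t ((P.hess xs t - P.hess x t) b)‖ ≤
      (P.C1 * ‖x - xs‖ * (P.C0 / P.m)) / P.m := by
    refine (hinv x _).trans (div_le_div_of_nonneg_right ?_ hm.le)
    calc ‖(P.hess xs t - P.hess x t) b‖ ≤ ‖P.hess xs t - P.hess x t‖ * ‖b‖ :=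
          ContinuousLinearMap.le_opNorm _ _
      _ ≤ (P.C1 * ‖x - xs‖) * (P.C0 / P.m) := by
          apply mul_le_mul hhl hbnorm (norm_nonneg _) (by positivity)
  calc ‖P.hessInv x t (P.dtgrad x t - P.dtgrad xs t) +
        P.hessInv x t ((P.hess xs t - P.hess x t) b)‖
      ≤ ‖P.hessInv x t (P.dtgrad x t - P.dtgrad xs t)‖ +
        ‖P.hessInv x t ((P.hess xs t - P.hess x t) b)‖ := norm_add_le _ _
    _ ≤ P.C2 * ‖x - xs‖ / P.m + (P.C1 * ‖x - xs‖ * (P.C0 / P.m)) / P.m :=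
        add_le_add hA hB
    _ = (P.C0 * P.C1 / P.m ^ 2 + P.C2 / P.m) * ‖x - xs‖ := by
        field_simp
        ring
end
end
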